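/- arXiv:2605.17231 — 2 statements merged into one kernel-verified Lean document; each statement's English description precedes it below -/
import Mathlib

section
/- Let B be a symmetric positive definite matrix whose eigenvalues all lie in the interval [a, b] with 0 < a ≤ b. Then for every unit vector ν, (ν^T B² ν) / (ν^T B ν)² ≤ (a+b)²/(4ab). -/
open Matrix

set_option maxHeartbeats 1000000 in
/-- Kantorovich inequality: if the symmetric matrix `B` has all eigenvalues in
`[a, b]` with `0 < a ≤ b` (expressed via Rayleigh-quotient bounds), then for
every unit vector `ν`, `(νᵀB²ν)/(νᵀBν)² ≤ (a+b)²/(4ab)`. -/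
theorem stmt6 {d : ℕ} (B : Matrix (Fin d) (Fin d) ℝ) (hB : B.IsSymm)
    (a b : ℝ) (ha : 0 < a) (hab : a ≤ b)
    (hray : ∀ x : Fin d → ℝ,
      a * (x ⬝ᵥ x) ≤ x ⬝ᵥ B.mulVec x ∧ x ⬝ᵥ B.mulVec x ≤ b * (x ⬝ᵥ x))
    (ν : Fin d → ℝ) (hν : ν ⬝ᵥ ν = 1) :
    (ν ⬝ᵥ (B * B).mulVec ν) / (ν ⬝ᵥ B.mulVec ν) ^ 2 ≤ (a + b) ^ 2 / (4 * a * b) := by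
  have hsym : ∀ x y : Fin d → ℝ, x ⬝ᵥ B.mulVec y = y ⬝ᵥ B.mulVec x := by
    intro x y
    rw [Matrix.dotProduct_mulVec, ← Matrix.mulVec_transpose, hB.eq, dotProduct_comm]
  set u := B.mulVec ν with hu
  set s := ν ⬝ᵥ u with hs
  set q := u ⬝ᵥ u with hqdef
  set t := u ⬝ᵥ B.mulVec u with ht
  have hνBu : ν ⬝ᵥ B.mulVec u = q := by
    rw [hsym ν u, hu, hqdef]
  have hgoal1 : ν ⬝ᵥ (B * B).mulVec ν = q := by
    rw [← Matrix.mulVec_mulVec, ← hu, hνBu]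
  rw [hgoal1]
  set x : Fin d → ℝ := u - a • ν with hx
  have hνx : ν ⬝ᵥ x = s - a := by
    simp [hx, dotProduct_sub, dotProduct_smul, smul_eq_mul, hν, hs]
  have hx1 : x ⬝ᵥ x = q - 2 * a * s + a ^ 2 := by
    simp [hx, dotProduct_sub, sub_dotProduct, dotProduct_smul, smul_dotProduct,
      smul_eq_mul, hν, dotProduct_comm u ν, ← hs, ← hqdef]
    ring
  have hνBx : ν ⬝ᵥ B.mulVec x = q - a * s := by
    simp [hx, Matrix.mulVec_sub, Matrix.mulVec_smul, dotProduct_sub, dotProduct_smul,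
      smul_eq_mul, hνBu, ← hs]
    exact Or.inl (by rw [hs, hu])
  have hxBx : x ⬝ᵥ B.mulVec x = t - 2 * a * q + a ^ 2 * s := by
    simp [hx, Matrix.mulVec_sub, Matrix.mulVec_smul, dotProduct_sub, sub_dotProduct,
      dotProduct_smul, smul_dotProduct, smul_eq_mul, hνBu, ← ht]
    have h1 : u ⬝ᵥ B.mulVec ν = q := by rw [hsym u ν, hνBu]
    have h2 : ν ⬝ᵥ B.mulVec ν = s := by rw [hs, hu]
    rw [h1, h2]; ring
  have ha_s : a ≤ s := by
    have h := (hray ν).1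
    rw [hν] at h
    have h2 : ν ⬝ᵥ B.mulVec ν = s := by rw [hs, hu]
    rw [h2] at h; linarith
  have hQ0 : 0 ≤ q - 2 * a * s + a ^ 2 := by
    rw [← hx1]
    exact Finset.sum_nonneg fun i _ => mul_self_nonneg (x i)
  -- Rayleigh upper bound at x
  have hA2 : x ⬝ᵥ B.mulVec x ≤ b * (x ⬝ᵥ x) := (hray x).2
  rw [hxBx, hx1] at hA2
  -- Cauchy–Schwarz in the C = B - aI inner product via discriminant
  set Q : ℝ := q - 2 * a * s + a ^ 2 with hQ
  set A2 : ℝ := t - 3 * a * q + 3 * a ^ 2 * s - a ^ 3 with hA2def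
  clear_value A2
  have hquad : ∀ r : ℝ, 0 ≤ A2 * (r * r) + (2 * Q) * r + (s - a) := by
    intro r
    have h := (hray (ν + r • x)).1
    have hy1 : (ν + r • x) ⬝ᵥ (ν + r • x)
        = 1 + 2 * r * (s - a) + r ^ 2 * Q := by
      simp only [dotProduct_add, add_dotProduct, dotProduct_smul, smul_dotProduct,
        smul_eq_mul, hν, hνx, hx1, dotProduct_comm x ν]
      ring
    have hy2 : (ν + r • x) ⬝ᵥ B.mulVec (ν + r • x)
        = s + 2 * r * (q - a * s) + r ^ 2 * (t - 2 * a * q + a ^ 2 * s) := by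
      simp only [Matrix.mulVec_add, Matrix.mulVec_smul, dotProduct_add, add_dotProduct,
        dotProduct_smul, smul_dotProduct, smul_eq_mul]
      have h2 : ν ⬝ᵥ B.mulVec ν = s := by rw [hs, hu]
      have h3 : x ⬝ᵥ B.mulVec ν = q - a * s := by rw [hsym x ν, hνBx]
      rw [h2, h3, hνBx, hxBx]; ring
    rw [hy1, hy2] at h
    rw [hA2def]
    rw [hQ] at h ⊢
    nlinarith [h]
  have hdisc := discrim_le_zero hquad
  rw [discrim] at hdisc
  -- so (2Q)^2 - 4 * A2 * (s-a) ≤ 0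
  have hCS : Q ^ 2 ≤ A2 * (s - a) := by nlinarith [hdisc]
  have haQ : a * Q = a * q - 2 * a ^ 2 * s + a ^ 3 := by rw [hQ]; ring
  have hA2le : A2 ≤ (b - a) * Q := by
    rw [hA2def]; nlinarith [hA2, haQ]
  clear_value Q
  clear_value s q t u x
  clear hquad hdisc hνBu hgoal1 hνx hνBx hxBx hx1 hu hs hqdef ht hx hν hsym hray hB B ν u x
  have hQle : Q ≤ (b - a) * (s - a) := by
    rcases eq_or_lt_of_le hQ0 with h0 | h0
    · rw [← h0]
      exact mul_nonneg (by linarith) (by linarith)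
    · have hmul : Q * Q ≤ ((b - a) * (s - a)) * Q := by
        nlinarith [hCS, mul_le_mul_of_nonneg_right hA2le h0.le]
      exact le_of_mul_le_mul_right hmul h0
  have hq_le : q ≤ (a + b) * s - a * b := by
    have : q - 2 * a * s + a ^ 2 ≤ (b - a) * (s - a) := by rw [← hQ]; exact hQle
    nlinarith [this]
  have hspos : 0 < s := lt_of_lt_of_le ha ha_s
  have h4ab : (0:ℝ) < 4 * a * b := by nlinarith
  rw [div_le_div_iff₀ (pow_pos hspos 2) h4ab]
  nlinarith [hq_le, sq_nonneg ((a + b) * s - 2 * a * b), hspos, mul_pos ha (lt_of_lt_of_le ha hab)]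
end

section
/- Let G be symmetric positive definite, M = G^{1/2}(I + S)G^{1/2} where S is symmetric with ‖S‖₂ ≤ η < 1. Then the cost ratio R_G(M;q) = (q^T M^{-1} G M^{-1} q)(q^T G^{-1} q)/(q^T M^{-1} q)² satisfies R_G(M;q) ≤ 1/(1−η²) for all nonzero q. -/
open Matrix

lemma quadform' {d : ℕ} (A N : Matrix (Fin d) (Fin d) ℝ) (z : Fin d → ℝ) :
    (A.mulVec z) ⬝ᵥ N.mulVec (A.mulVec z) = z ⬝ᵥ (Aᵀ * N * A).mulVec z := by
  rw [Matrix.mul_assoc, mulVec_mulVec]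
  conv_rhs => rw [← mulVec_mulVec, dotProduct_mulVec, vecMul_transpose]

lemma symmflip {d : ℕ} (S : Matrix (Fin d) (Fin d) ℝ) (hS : S.IsSymm) (z : Fin d → ℝ) :
    z ⬝ᵥ S.mulVec (S.mulVec z) = (S.mulVec z) ⬝ᵥ (S.mulVec z) := by
  conv_lhs => rw [dotProduct_mulVec, ← hS.eq, vecMul_transpose, hS.eq]

lemma expand1 {d : ℕ} (S : Matrix (Fin d) (Fin d) ℝ) (hS : S.IsSymm) (z : Fin d → ℝ) (c : ℝ) :
    (S.mulVec z + c • z) ⬝ᵥ S.mulVec (S.mulVec z + c • z)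
      = (S.mulVec z) ⬝ᵥ S.mulVec (S.mulVec z)
        + 2*c*((S.mulVec z) ⬝ᵥ (S.mulVec z)) + c^2 * (z ⬝ᵥ S.mulVec z) := by
  have h1 := symmflip S hS z
  have h2 : (S.mulVec z) ⬝ᵥ S.mulVec z = S.mulVec z ⬝ᵥ S.mulVec z := rfl
  simp only [mulVec_add, mulVec_smul, dotProduct_add, add_dotProduct, dotProduct_smul,
    smul_dotProduct, smul_eq_mul, h1]
  ring

lemma expand2 {d : ℕ} (S : Matrix (Fin d) (Fin d) ℝ) (z : Fin d → ℝ) (c : ℝ) :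
    (S.mulVec z + c • z) ⬝ᵥ (S.mulVec z + c • z)
      = (S.mulVec z) ⬝ᵥ (S.mulVec z) + 2*c*(z ⬝ᵥ S.mulVec z) + c^2 * (z ⬝ᵥ z) := by
  have h2 : (S.mulVec z) ⬝ᵥ z = z ⬝ᵥ S.mulVec z := dotProduct_comm _ _
  simp only [dotProduct_add, add_dotProduct, dotProduct_smul, smul_dotProduct, smul_eq_mul, h2]
  ring

/-- Stability under relative perturbation: let `G` be symmetric positive
definite with symmetric PSD square root `R` (`R * R = G`), and let
`M = G^{1/2}(I + S)G^{1/2}` where `S` is symmetric with spectral norm at most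
`η < 1` (expressed by `|xᵀSx| ≤ η‖x‖²` for all `x`).  Then the cost ratio
`R_G(M;q) = (qᵀM⁻¹GM⁻¹q)(qᵀG⁻¹q)/(qᵀM⁻¹q)²` is at most `1/(1−η²)` for all
nonzero `q`. -/
theorem stmt7 {d : ℕ} (G R S : Matrix (Fin d) (Fin d) ℝ)
    (hG : G.PosDef) (hR : R.PosSemidef) (hRG : R * R = G)
    (hS : S.IsSymm) (η : ℝ) (hη : η < 1)
    (hSnorm : ∀ x : Fin d → ℝ, |x ⬝ᵥ S.mulVec x| ≤ η * (x ⬝ᵥ x)) :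
    let M := R * (1 + S) * R
    ∀ q : Fin d → ℝ, q ≠ 0 →
      (q ⬝ᵥ (M⁻¹ * G * M⁻¹).mulVec q) * (q ⬝ᵥ G⁻¹.mulVec q)
          / (q ⬝ᵥ M⁻¹.mulVec q) ^ 2
        ≤ 1 / (1 - η ^ 2) := by
  intro M q hq
  have hM : M = R * (1 + S) * R := rfl
  have hdp : ∀ v : Fin d → ℝ, 0 ≤ v ⬝ᵥ v := fun v =>
    Finset.sum_nonneg fun i _ => mul_self_nonneg _
  have hdppos : ∀ v : Fin d → ℝ, v ≠ 0 → 0 < v ⬝ᵥ v := fun v hv =>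
    (hdp v).lt_of_ne fun h => hv (dotProduct_self_eq_zero.mp h.symm)
  have hqq : 0 < q ⬝ᵥ q := hdppos q hq
  have hη0 : 0 ≤ η := by
    have h := hSnorm q
    nlinarith [abs_nonneg (q ⬝ᵥ S.mulVec q)]
  -- symmetry facts
  have hRt : Rᵀ = R := hR.1
  have hTt : (1 + S)ᵀ = 1 + S := by rw [transpose_add, transpose_one, hS.eq]
  -- positivity of 1 + S
  have hT : (1 + S).PosDef := by
    refine posDef_iff_dotProduct_mulVec.mpr ⟨hTt, fun x hx => ?_⟩
    have h := abs_le.mp (hSnorm x)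
    have hxx := hdppos x hx
    simp only [star_trivial, add_mulVec, one_mulVec, dotProduct_add]
    nlinarith [h.1]
  -- determinants
  have hRdet : IsUnit R.det := by
    refine isUnit_iff_ne_zero.mpr fun h => ?_
    have hg := hG.det_pos
    rw [← hRG, det_mul, h, mul_zero] at hg
    exact lt_irrefl _ hg
  have hTdet : IsUnit (1 + S).det := isUnit_iff_ne_zero.mpr hT.det_pos.ne'
  haveI := R.invertibleOfIsUnitDet hRdet
  haveI := (1 + S).invertibleOfIsUnitDet hTdet
  -- change of variables
  set A := R * (1 + S) with hAdef
  haveI : Invertible A := invertibleMul R (1 + S)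
  obtain ⟨z, hzq⟩ : ∃ z, A.mulVec z = q :=
    ⟨A⁻¹.mulVec q, by rw [mulVec_mulVec, Matrix.mul_inv_of_invertible, one_mulVec]⟩
  have hz0 : z ≠ 0 := by
    intro h; apply hq; rw [← hzq, h, mulVec_zero]
  have hAt : Aᵀ = (1 + S) * R := by rw [hAdef, transpose_mul, hRt, hTt]
  have hMinv : M⁻¹ = R⁻¹ * ((1 + S)⁻¹ * R⁻¹) := by
    rw [hM, Matrix.mul_inv_rev, Matrix.mul_inv_rev]
  have hGinv : G⁻¹ = R⁻¹ * R⁻¹ := by rw [← hRG, Matrix.mul_inv_rev]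
  -- the three sandwich identities
  have key1 : Aᵀ * M⁻¹ * A = 1 + S := by
    rw [hAt, hMinv, hAdef]
    simp only [Matrix.mul_assoc, Matrix.mul_inv_cancel_left_of_invertible,
      Matrix.inv_mul_cancel_left_of_invertible, Matrix.inv_mul_of_invertible,
      Matrix.mul_inv_of_invertible, Matrix.mul_one, Matrix.one_mul]
  have key2 : Aᵀ * (M⁻¹ * G * M⁻¹) * A = 1 := by
    rw [hAt, hMinv, ← hRG, hAdef]
    simp only [Matrix.mul_assoc, Matrix.mul_inv_cancel_left_of_invertible,
      Matrix.inv_mul_cancel_left_of_invertible, Matrix.inv_mul_of_invertible,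
      Matrix.mul_inv_of_invertible, Matrix.mul_one, Matrix.one_mul]
  have key3 : Aᵀ * G⁻¹ * A = (1 + S) * (1 + S) := by
    rw [hAt, hGinv, hAdef]
    simp only [Matrix.mul_assoc, Matrix.mul_inv_cancel_left_of_invertible,
      Matrix.inv_mul_cancel_left_of_invertible, Matrix.inv_mul_of_invertible,
      Matrix.mul_inv_of_invertible, Matrix.mul_one, Matrix.one_mul]
  rw [← hzq, quadform' A (M⁻¹ * G * M⁻¹) z, quadform' A G⁻¹ z, quadform' A M⁻¹ z, key1, key2, key3]
  -- expand the quadratic forms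
  have hflip := symmflip S hS z
  have hU : z ⬝ᵥ ((1 + S) * (1 + S)).mulVec z
      = z ⬝ᵥ z + 2 * (z ⬝ᵥ S.mulVec z) + (S.mulVec z) ⬝ᵥ (S.mulVec z) := by
    rw [← mulVec_mulVec]
    simp only [add_mulVec, one_mulVec, mulVec_add, dotProduct_add, hflip]
    ring
  have hTq : z ⬝ᵥ (1 + S).mulVec z = z ⬝ᵥ z + z ⬝ᵥ S.mulVec z := by
    simp only [add_mulVec, one_mulVec, dotProduct_add]
  have hOne : z ⬝ᵥ (1 : Matrix (Fin d) (Fin d) ℝ).mulVec z = z ⬝ᵥ z := by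
    rw [one_mulVec]
  rw [hU, hTq, hOne]
  -- scalar quantities
  set P := z ⬝ᵥ z with hPdef
  set s := z ⬝ᵥ S.mulVec z with hsdef
  set r := (S.mulVec z) ⬝ᵥ (S.mulVec z) with hrdef
  have hP : 0 < P := hdppos z hz0
  have hr0 : 0 ≤ r := hdp _
  have hs := abs_le.mp (hSnorm z)
  -- the key bound r ≤ η² P
  have hr : r ≤ η ^ 2 * P := by
    rcases hη0.eq_or_lt with hη0' | hηpos
    · -- η = 0 : all quadratic forms vanish
      have e1 := hSnorm (S.mulVec z + (1 : ℝ) • z)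
      rw [expand1 S hS z 1, expand2 S z 1] at e1
      have e2 := hSnorm (S.mulVec z)
      have e3 := hSnorm z
      rw [← hη0'] at e1 e2 e3
      have a1 := abs_le.mp e1
      have a2 := abs_le.mp e2
      have a3 := abs_le.mp e3
      simp only [← hη0']
      nlinarith [a1.1, a1.2, a2.1, a2.2, a3.1, a3.2]
    · have e1 := hSnorm (S.mulVec z + η • z)
      rw [expand1 S hS z η, expand2 S z η] at e1
      have e2 := hSnorm (S.mulVec z + (-η) • z)
      rw [expand1 S hS z (-η), expand2 S z (-η)] at e2
      have a1 := (abs_le.mp e1).2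
      have a2 := (abs_le.mp e2).1
      have h4 : 2 * η * r ≤ 2 * η * (η ^ 2 * P) := by nlinarith
      exact le_of_mul_le_mul_left h4 (by positivity)
  -- final scalar inequality
  have hD : 0 < 1 - η ^ 2 := by nlinarith
  have hTpos : 0 < P + s := by nlinarith [hs.1]
  rw [div_le_div_iff₀ (by positivity) hD]
  nlinarith [sq_nonneg (s + η ^ 2 * P),
    mul_nonneg (mul_nonneg hD.le hP.le) (sub_nonneg.mpr hr)]
end
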